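/- For the triangle T = conv{(0,0),(1,(D-1)/D),(D,0)} with D ≥ 2, |kT ∩ ℤ²| equals the Ehrhart polynomial of the integral triangle T' = conv{(1,0),(1,1),(D,0)}, namely ((D−1)/2)k² + ((D+1)/2)k + 1, for all integers k ≥ 1. -/

import Mathlib

open Pointwise

/-- Number of integer lattice points of `ℤ²` lying in a subset of `ℝ²`. -/
noncomputable def latticeCount2 (S : Set (ℝ × ℝ)) : ℕ :=
  {p : ℤ × ℤ | ((p.1 : ℝ), (p.2 : ℝ)) ∈ S}.ncard

/-- The rational triangle with vertices `(0,0)`, `(1,(D-1)/D)`, `(D,0)`. -/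
noncomputable def TriT (D : ℤ) : Set (ℝ × ℝ) :=
  convexHull ℝ {(0, 0), (1, ((D : ℝ) - 1) / (D : ℝ)), ((D : ℝ), 0)}

lemma tri_mem (D : ℤ) (hD : 2 ≤ D) (k : ℕ) (hk : 1 ≤ k) (p : ℝ × ℝ) :
    p ∈ (k : ℝ) • TriT D ↔
      0 ≤ p.2 ∧ (D : ℝ) * p.2 ≤ ((D : ℝ) - 1) * p.1 ∧ p.1 + (D : ℝ) * p.2 ≤ (k : ℝ) * D := by
  have hDR : (2:ℝ) ≤ (D:ℝ) := by exact_mod_cast hD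
  have hD0 : (D:ℝ) ≠ 0 := by linarith
  have hD1 : (D:ℝ) - 1 ≠ 0 := by linarith
  have hD1' : (0:ℝ) < (D:ℝ) - 1 := by linarith
  set K : ℝ := (k:ℝ) with hK
  have hk0 : (0:ℝ) < K := by rw [hK]; exact_mod_cast hk
  have hkD : (0:ℝ) < K * D := by positivity
  have hsmul : (K • TriT D) =
      convexHull ℝ {((0:ℝ), (0:ℝ)), (K, K * (((D:ℝ)-1)/D)), (K * D, 0)} := by
    rw [TriT, ← convexHull_smul]
    congr 1
    simp only [Set.smul_set_insert, Set.smul_set_singleton, Prod.smul_mk, smul_eq_mul,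
      mul_zero, mul_one]
  rw [hsmul]
  constructor
  · intro hp
    have hconv : Convex ℝ {q : ℝ × ℝ | 0 ≤ q.2 ∧ (D:ℝ) * q.2 ≤ ((D:ℝ)-1) * q.1 ∧
        q.1 + (D:ℝ) * q.2 ≤ K * D} := by
      have c1 : Convex ℝ {q : ℝ × ℝ | 0 ≤ q.2} :=
        convex_halfSpace_ge (IsLinearMap.mk (fun a b => rfl) (fun c a => rfl)) 0
      have c2 : Convex ℝ {q : ℝ × ℝ | (D:ℝ) * q.2 - ((D:ℝ)-1) * q.1 ≤ 0} := by
        refine convex_halfSpace_le ?_ 0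
        constructor
        · intro a b; simp [Prod.fst_add, Prod.snd_add]; ring
        · intro c a; simp [Prod.smul_fst, Prod.smul_snd, smul_eq_mul]; ring
      have c3 : Convex ℝ {q : ℝ × ℝ | q.1 + (D:ℝ) * q.2 ≤ K * D} := by
        refine convex_halfSpace_le ?_ (K * D)
        constructor
        · intro a b; simp [Prod.fst_add, Prod.snd_add]; ring
        · intro c a; simp [Prod.smul_fst, Prod.smul_snd, smul_eq_mul]; ring
      have hcc := (c1.inter (c2.inter c3))
      convert hcc using 1
      ext q
      simp only [Set.mem_inter_iff, Set.mem_setOf_eq]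
      constructor
      · rintro ⟨ha, hb, hc⟩; exact ⟨ha, by linarith, hc⟩
      · rintro ⟨ha, ⟨hb, hc⟩⟩; exact ⟨ha, by linarith, hc⟩
    refine convexHull_min ?_ hconv hp
    intro q hq
    simp only [Set.mem_insert_iff, Set.mem_singleton_iff] at hq
    rcases hq with rfl | rfl | rfl
    · refine ⟨le_refl 0, by simp, by dsimp; nlinarith⟩
    · refine ⟨?_, ?_, ?_⟩
      · dsimp; apply mul_nonneg hk0.le; apply div_nonneg (by linarith) (by linarith)
      · dsimp
        have he : (D:ℝ) * (K * (((D:ℝ)-1)/D)) = ((D:ℝ)-1) * K := by field_simp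
        rw [he]
      · dsimp
        have he : K + (D:ℝ) * (K * (((D:ℝ)-1)/D)) = K * D := by field_simp; ring
        rw [he]
    · exact ⟨le_refl 0, by dsimp; nlinarith, by dsimp; nlinarith⟩
  · rintro ⟨h1, h2, h3⟩
    obtain ⟨x, y⟩ := p
    dsimp at h1 h2 h3 ⊢
    rw [convexHull_insert ⟨_, Set.mem_insert _ _⟩, mem_convexJoin]
    set v1 : ℝ × ℝ := (K, K * (((D:ℝ)-1)/D)) with hv1
    set v2 : ℝ × ℝ := (K * D, 0) with hv2
    set b : ℝ := (D:ℝ) * y / (K * ((D:ℝ)-1)) with hb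
    set c : ℝ := (x - (D:ℝ) * y / ((D:ℝ)-1)) / (K * D) with hc
    have hKD1 : (0:ℝ) < K * ((D:ℝ)-1) := by nlinarith
    have hb0 : 0 ≤ b := by
      apply div_nonneg _ hKD1.le
      nlinarith
    have hc0 : 0 ≤ c := by
      apply div_nonneg _ hkD.le
      rw [sub_nonneg, div_le_iff₀ hD1']
      linarith
    set t : ℝ := b + c with ht
    have ht1 : t = (x + (D:ℝ)*y) / (K * D) := by
      rw [ht, hb, hc]; field_simp; ring
    have ht0 : 0 ≤ t := add_nonneg hb0 hc0
    have htle : t ≤ 1 := by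
      rw [ht1, div_le_one hkD]; linarith
    by_cases h0 : t = 0
    · have hbz : b = 0 := by linarith
      have hcz : c = 0 := by linarith
      have hy : y = 0 := by
        rcases div_eq_zero_iff.mp (hb ▸ hbz) with h | h
        · rcases mul_eq_zero.mp h with h' | h'
          · exact absurd h' hD0
          · exact h'
        · exact absurd h (ne_of_gt hKD1)
      have hx : x = 0 := by
        rcases div_eq_zero_iff.mp (hc ▸ hcz) with h | h
        · rw [hy] at h; simpa using h
        · exact absurd h (ne_of_gt hkD)
      subst hx; subst hy
      exact ⟨(0,0), Set.mem_singleton _, v1,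
        by rw [convexHull_pair]; exact left_mem_segment _ _ _,
        left_mem_segment _ _ _⟩
    · have ht0' : 0 < t := lt_of_le_of_ne ht0 (Ne.symm h0)
      refine ⟨(0,0), Set.mem_singleton _, (b/t) • v1 + (c/t) • v2, ?_, ?_⟩
      · rw [convexHull_pair]
        exact ⟨b/t, c/t, by positivity, by positivity, by field_simp; linarith, rfl⟩
      · refine ⟨1 - t, t, by linarith, ht0, by ring, ?_⟩
        rw [hv1, hv2]
        simp only [Prod.smul_mk, smul_eq_mul, Prod.mk_add_mk, smul_add, Prod.ext_iff,
          mul_zero, add_zero, zero_add, smul_zero]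
        constructor
        · show t * (b / t * K + c / t * (K * (D:ℝ))) = x
          have e : ∀ u v : ℝ, t * (u / t * v) = u * v := fun u v => by field_simp
          rw [mul_add, e, e, hb, hc]
          field_simp
          ring
        · show t * (b / t * (K * (((D:ℝ)-1)/D))) = y
          have e : ∀ u v : ℝ, t * (u / t * v) = u * v := fun u v => by field_simp
          rw [e, hb]
          field_simp


lemma gauss (n : ℕ) : 2 * ∑ i ∈ Finset.range n, (i:ℤ) = n * (n-1) := by
  induction n with
  | zero => simp
  | succ n ih =>
    rw [Finset.sum_range_succ]
    push_cast
    push_cast at ih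
    ring_nf
    ring_nf at ih
    linarith

lemma L1 (d : ℕ) (hd : 1 ≤ d) (k : ℕ) :
    2 * ∑ j ∈ Finset.range (k*d), ((j:ℤ) / (d:ℤ)) = (d:ℤ) * k * (k-1) := by
  induction k with
  | zero => simp
  | succ k ih =>
    rw [show (k+1)*d = k*d + d by ring, Finset.sum_range_add]
    have hblock : ∀ i ∈ Finset.range d, ((k*d + i : ℕ) : ℤ) / (d:ℤ) = (k:ℤ) := by
      intro i hi
      rw [Finset.mem_range] at hi
      have h1 : ((k*d + i : ℕ) : ℤ) = (i:ℤ) + (d:ℤ) * (k:ℤ) := by push_cast; ring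
      rw [h1, Int.add_mul_ediv_left _ _ (show (d:ℤ) ≠ 0 by exact_mod_cast Nat.one_le_iff_ne_zero.mp hd)]
      rw [Int.ediv_eq_zero_of_lt (by positivity) (by exact_mod_cast hi)]
      ring
    rw [Finset.sum_congr rfl hblock, Finset.sum_const, Finset.card_range]
    push_cast
    push_cast at ih
    ring_nf
    ring_nf at ih
    linarith

lemma sum_Icc_int (n : ℕ) (f : ℤ → ℤ) :
    ∑ x ∈ Finset.Icc (0:ℤ) (n:ℤ), f x = ∑ i ∈ Finset.range (n+1), f (i:ℤ) := by
  refine Finset.sum_nbij' (fun x : ℤ => x.toNat) (fun i : ℕ => (i:ℤ)) ?_ ?_ ?_ ?_ ?_ <;>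
    intro a ha <;>
    simp only [Finset.mem_Icc, Finset.mem_range] at *
  · omega
  · omega
  · omega
  · omega
  · congr 1
    omega

lemma sum_eval (D : ℤ) (hD : 2 ≤ D) (k : ℕ) (hk : 1 ≤ k) :
    2 * ∑ x ∈ Finset.Icc (0:ℤ) ((k:ℤ)*D), ((min ((D-1)*x) ((k:ℤ)*D - x)) / D + 1)
      = (D-1)*(k:ℤ)^2 + (D+1)*(k:ℤ) + 2 := by
  have hD0 : (0:ℤ) < D := by linarith
  set d : ℕ := D.toNat with hd
  have hdD : (d:ℤ) = D := Int.toNat_of_nonneg (by linarith)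
  have hd2 : 2 ≤ d := by omega
  have hkd : k ≤ k * d := Nat.le_mul_of_pos_right k (by omega)
  set M : ℕ := k * d - k with hM
  have hn : ((k*d : ℕ) : ℤ) = (k:ℤ)*D := by rw [← hdD]; push_cast; ring
  rw [← hn, sum_Icc_int]
  have hsplit : k*d + 1 = (k+1) + M := by omega
  rw [hsplit, Finset.sum_range_add, hn]
  -- first block
  have part1 : ∑ i ∈ Finset.range (k+1), (min ((D-1)*(i:ℤ)) ((k:ℤ)*D - i) / D + 1)
      = ∑ i ∈ Finset.range (k+1), ((i:ℤ) + (-(i:ℤ))/D + 1) := by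
    apply Finset.sum_congr rfl
    intro i hi
    rw [Finset.mem_range] at hi
    have hik : (i:ℤ) ≤ (k:ℤ) := by exact_mod_cast Nat.lt_succ_iff.mp hi
    have hmin : min ((D-1)*(i:ℤ)) ((k:ℤ)*D - i) = (D-1)*(i:ℤ) := by
      apply min_eq_left
      have h := mul_le_mul_of_nonneg_left hik (by linarith : (0:ℤ) ≤ D)
      have hc : D * (k:ℤ) = (k:ℤ) * D := mul_comm _ _
      linarith
    rw [hmin, show (D-1)*(i:ℤ) = -(i:ℤ) + D*(i:ℤ) by ring,
      Int.add_mul_ediv_left _ _ hD0.ne']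
    ring
  rw [part1]
  -- second block
  have part2 : ∑ j ∈ Finset.range M, (min ((D-1)*((k+1+j : ℕ):ℤ)) ((k:ℤ)*D - ((k+1+j : ℕ):ℤ)) / D + 1)
      = ∑ j ∈ Finset.range M, (((M - 1 - j : ℕ):ℤ)/D + 1) := by
    apply Finset.sum_congr rfl
    intro j hj
    rw [Finset.mem_range] at hj
    have hik : (k:ℤ) ≤ ((k+1+j:ℕ):ℤ) := by push_cast; omega
    have hmin : min ((D-1)*((k+1+j:ℕ):ℤ)) ((k:ℤ)*D - ((k+1+j:ℕ):ℤ))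
        = (k:ℤ)*D - ((k+1+j:ℕ):ℤ) := by
      apply min_eq_right
      have h := mul_le_mul_of_nonneg_left hik (by linarith : (0:ℤ) ≤ D)
      have hc : D * (k:ℤ) = (k:ℤ) * D := mul_comm _ _
      nlinarith [hik]
    rw [hmin]
    congr 2
    rw [← hn]
    omega
  rw [part2]
  -- now pure sums
  rw [Finset.sum_add_distrib, Finset.sum_add_distrib, Finset.sum_add_distrib,
    Finset.sum_const, Finset.sum_const, Finset.card_range, Finset.card_range]
  set A : ℤ := ∑ i ∈ Finset.range (k+1), (i:ℤ) with hA
  set B : ℤ := ∑ i ∈ Finset.range (k+1), (-(i:ℤ))/D with hB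
  have hrefl : ∑ j ∈ Finset.range M, (((M - 1 - j : ℕ):ℤ)/D)
      = ∑ j ∈ Finset.range M, ((j:ℤ)/D) :=
    Finset.sum_range_reflect (fun j => ((j:ℤ))/D) M
  rw [hrefl]
  set S2 : ℤ := ∑ j ∈ Finset.range M, ((j:ℤ)/D) with hS2
  set ST : ℤ := ∑ j ∈ Finset.range (k*d), ((j:ℤ)/D) with hST
  have hE4 : 2 * ST = (d:ℤ) * k * (k-1) := by
    rw [hST]
    conv_lhs => rw [← hdD]
    exact L1 d (by omega) k
  have hE5 : 2 * A = ((k:ℤ)+1) * ((k+1:ℤ)-1) := by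
    have := gauss (k+1); push_cast at this ⊢; linarith
  -- tail of ST
  have htail : ∀ i ∈ Finset.range k, ((M + i : ℕ):ℤ)/D = ((i:ℤ) - k)/D + (k:ℤ) := by
    intro i hi
    rw [Finset.mem_range] at hi
    have h1 : ((M + i : ℕ):ℤ) = ((i:ℤ) - (k:ℤ)) + D * (k:ℤ) := by
      have h2 : ((M + i : ℕ):ℤ) = ((k*d:ℕ):ℤ) - (k:ℤ) + (i:ℤ) := by omega
      rw [h2, hn]; ring
    rw [h1, Int.add_mul_ediv_left _ _ hD0.ne']
  have hE3 : ST = S2 + ((k:ℤ)*k + ∑ i ∈ Finset.range k, ((i:ℤ) - k)/D) := by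
    rw [hST, show k*d = M + k by omega, Finset.sum_range_add,
      Finset.sum_congr rfl htail, Finset.sum_add_distrib, Finset.sum_const,
      Finset.card_range]
    push_cast
    ring
  -- cancellation between B and the tail sum
  have hBtail : ∑ i ∈ Finset.range k, ((i:ℤ) - k)/D
      = ∑ i ∈ Finset.range k, (-((i:ℤ)+1))/D := by
    rw [← Finset.sum_range_reflect (fun i => ((i:ℤ) - k)/D) k]
    apply Finset.sum_congr rfl
    intro i hi
    rw [Finset.mem_range] at hi
    congr 1
    omega
  have hBeq : B = ∑ i ∈ Finset.range k, (-((i:ℤ)+1))/D := by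
    rw [hB, Finset.sum_range_succ']
    simp
  rw [hBtail, ← hBeq] at hE3
  have hE3' : 2 * ST = 2 * S2 + 2 * ((k:ℤ)*k) + 2 * B := by linarith
  have hMZ : (M:ℤ) = (k:ℤ) * (d:ℤ) - (k:ℤ) := by
    have h2 : (M:ℤ) = ((k*d:ℕ):ℤ) - (k:ℤ) := by omega
    rw [h2]; push_cast; ring
  rw [← hdD]
  simp only [nsmul_eq_mul, mul_one]
  push_cast
  linarith [hE4, hE5, hE3', hMZ]


lemma count_eq (D : ℤ) (hD : 2 ≤ D) (k : ℕ) (hk : 1 ≤ k) :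
    (latticeCount2 ((k : ℝ) • TriT D) : ℤ) =
      ∑ x ∈ Finset.Icc (0:ℤ) (k*D), ((min ((D-1)*x) ((k:ℤ)*D - x)) / D + 1) := by
  have hkZ : (1:ℤ) ≤ (k:ℤ) := by exact_mod_cast hk
  have hD0 : (0:ℤ) < D := by linarith
  classical
  set F : Finset (ℤ × ℤ) :=
    (Finset.Icc (0:ℤ) ((k:ℤ)*D) ×ˢ Finset.Icc (0:ℤ) (k:ℤ)).filter
      (fun p => D * p.2 ≤ (D-1) * p.1 ∧ p.1 + D * p.2 ≤ (k:ℤ)*D) with hF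
  have hmemF : ∀ p : ℤ × ℤ, p ∈ F ↔
      0 ≤ p.2 ∧ D * p.2 ≤ (D-1) * p.1 ∧ p.1 + D * p.2 ≤ (k:ℤ)*D := by
    intro ⟨x, y⟩
    simp only [hF, Finset.mem_filter, Finset.mem_product, Finset.mem_Icc]
    constructor
    · rintro ⟨⟨⟨_, _⟩, ⟨hy0, _⟩⟩, h2, h3⟩; exact ⟨hy0, h2, h3⟩
    · rintro ⟨h1, h2, h3⟩
      have hx0 : 0 ≤ x := by
        have hDy : (0:ℤ) ≤ D * y := mul_nonneg (by linarith) h1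
        have : (D-1) * 0 ≤ (D-1) * x := by linarith
        exact le_of_mul_le_mul_left this (by linarith)
      have hyk : y ≤ (k:ℤ) := by
        have h4 : D*(D*y) ≤ D*((k:ℤ)*D - k) := by nlinarith
        have h5 : D*y ≤ (k:ℤ)*D - k := le_of_mul_le_mul_left h4 hD0
        have h6 : D*y ≤ D*(k:ℤ) := by
          have := mul_comm D (k:ℤ); linarith
        exact le_of_mul_le_mul_left h6 hD0
      refine ⟨⟨⟨hx0, ?_⟩, ⟨h1, hyk⟩⟩, h2, h3⟩
      have hDy : (0:ℤ) ≤ D * y := mul_nonneg (by linarith) h1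
      linarith
  have hset : {p : ℤ × ℤ | ((p.1 : ℝ), (p.2 : ℝ)) ∈ (k:ℝ) • TriT D} = ↑F := by
    ext ⟨x, y⟩
    rw [Set.mem_setOf_eq, tri_mem D hD k hk, Finset.mem_coe, hmemF]
    dsimp only
    constructor
    · rintro ⟨h1, h2, h3⟩
      exact ⟨by exact_mod_cast h1, by exact_mod_cast h2, by exact_mod_cast h3⟩
    · rintro ⟨h1, h2, h3⟩
      exact ⟨by exact_mod_cast h1, by exact_mod_cast h2, by exact_mod_cast h3⟩
  rw [latticeCount2, hset, Set.ncard_coe_finset]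
  have hfib : F.card = ∑ x ∈ Finset.Icc (0:ℤ) ((k:ℤ)*D),
      (F.filter (fun p => p.1 = x)).card := by
    apply Finset.card_eq_sum_card_fiberwise
    intro p hp
    rw [Finset.mem_coe, hmemF] at hp
    rw [Finset.mem_coe, Finset.mem_Icc]
    obtain ⟨h1, h2, h3⟩ := hp
    have hDy : (0:ℤ) ≤ D * p.2 := mul_nonneg (by linarith) h1
    constructor
    · have : (D-1) * 0 ≤ (D-1) * p.1 := by linarith
      exact le_of_mul_le_mul_left this (by linarith)
    · linarith
  rw [hfib]
  push_cast
  apply Finset.sum_congr rfl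
  intro x hx
  rw [Finset.mem_Icc] at hx
  set m : ℤ := (min ((D-1)*x) ((k:ℤ)*D - x)) / D with hm
  have hm0 : 0 ≤ m := by
    apply Int.ediv_nonneg _ hD0.le
    rw [le_min_iff]
    constructor
    · nlinarith [hx.1]
    · linarith [hx.2]
  have hcard : (F.filter (fun p => p.1 = x)).card = (Finset.Icc (0:ℤ) m).card := by
    refine Finset.card_nbij' (fun p => p.2) (fun y => (x, y)) ?_ ?_ ?_ ?_
    · intro p hp
      simp only [Finset.mem_coe, Finset.mem_filter] at hp
      obtain ⟨hpF, hpx⟩ := hp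
      rw [hmemF] at hpF
      rw [Finset.mem_coe, Finset.mem_Icc]
      refine ⟨hpF.1, ?_⟩
      rw [hm, Int.le_ediv_iff_mul_le hD0, le_min_iff]
      constructor
      · rw [mul_comm]; rw [← hpx]; exact hpF.2.1
      · have := hpF.2.2; rw [hpx] at this; linarith [mul_comm p.2 D]
    · intro y hy
      rw [Finset.mem_coe, Finset.mem_Icc] at hy
      have hymul : y * D ≤ min ((D-1)*x) ((k:ℤ)*D - x) :=
        (Int.le_ediv_iff_mul_le hD0).mp (hm ▸ hy.2)
      rw [le_min_iff] at hymul
      simp only [Finset.mem_coe, Finset.mem_filter]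
      constructor
      · rw [hmemF]
        exact ⟨hy.1, by dsimp; linarith [hymul.1], by dsimp; linarith [hymul.2]⟩
      · trivial
    · intro p hp
      simp only [Finset.mem_coe, Finset.mem_filter] at hp
      exact Prod.ext hp.2.symm rfl
    · intro y hy
      rfl
  rw [hcard, Int.card_Icc]
  rw [Int.toNat_of_nonneg (by linarith)]
  push_cast
  ring


theorem stmt18 (D : ℤ) (hD : 2 ≤ D) (k : ℕ) (hk : 1 ≤ k) :
    (latticeCount2 ((k : ℝ) • TriT D) : ℚ) =
      (((D : ℚ) - 1) / 2) * k ^ 2 + (((D : ℚ) + 1) / 2) * k + 1 := by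
  have h1 := count_eq D hD k hk
  have h2 := sum_eval D hD k hk
  have h3 : 2 * (latticeCount2 ((k : ℝ) • TriT D) : ℤ)
      = (D-1)*(k:ℤ)^2 + (D+1)*(k:ℤ) + 2 := by rw [h1]; exact h2
  have h4 : (2:ℚ) * (latticeCount2 ((k : ℝ) • TriT D) : ℚ)
      = ((D:ℚ)-1)*(k:ℚ)^2 + ((D:ℚ)+1)*(k:ℚ) + 2 := by exact_mod_cast h3
  linarith [h4]
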